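/- arXiv:2311.16403 — 2 statements merged into one kernel-verified Lean document; each statement's English description precedes it below -/
import Mathlib

section
/- Let C ∈ M_{n-1} and let V = k·p_n be a 1-dimensional space placed in degree n. Then the graded 2-cocycles θ ∈ Z²_g(p(C),V), identified with tuples (θ_1,...,θ_{n-1}) ∈ k^{n-1} via θ(p_i,p_j) = δ_{i+j,n} θ_i p_n, are exactly the tuples satisfying θ_i = θ_{n-i} for all i, and θ_{i+j} c_{ij} = θ_{j+k} c_{jk} for all i,j,k ≥ 1 with i+j+k = n. -/
/-- Bilinear multiplication determined by the coefficient matrix `c`: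
`p_i p_j = c i j • p_{i+j}`. -/
def dmul {K : Type*} [Field K] (c : ℕ → ℕ → K) (x y : ℕ → K) : ℕ → K :=
  fun m => ∑ i ∈ Finset.range (m + 1), c i (m - i) * x i * y (m - i)

/-- The bilinear map `p(C) × p(C) → V = k·p_n` (written via its coefficient in `p_n`)
associated with a tuple `t`: `θ(p_i, p_j) = δ_{i+j,n} t_i p_n`. -/
def Bform {K : Type*} [Field K] (n : ℕ) (t : ℕ → K) (x y : ℕ → K) : K :=
  ∑ i ∈ Finset.Ico 1 n, t i * x i * y (n - i)

/-! Since `c` vanishes on the axes, both `θ(xy, z)` and `θ(x, yz)` are sums over the triples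
`(i, j, l)` of positive integers with `i + j + l = n`, of `x_i y_j z_l` times `t_{i+j} c_{ij}` and
`t_i c_{jl}` respectively. Testing on basis vectors shows that a cocycle satisfies the
relations; conversely, the relations together with `t_i = t_{n-i} = t_{j+l}` make the two
coefficients agree. -/

open Finset

theorem Finset.sum_Ico_sum_Ico_sub_comm {M : Type*} [AddCommMonoid M] (n : ℕ)
    (f : ℕ → ℕ → ℕ → M) :
    ∑ m ∈ Ico 1 n, ∑ i ∈ Ico 1 m, f i (m - i) (n - m) =
      ∑ i ∈ Ico 1 n, ∑ j ∈ Ico 1 (n - i), f i j (n - i - j) := by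
  rw [sum_sigma', sum_sigma']
  refine sum_nbij' (fun p => ⟨p.2, p.1 - p.2⟩) (fun p => ⟨p.1 + p.2, p.1⟩) ?_ ?_ ?_ ?_ ?_ <;>
    rintro ⟨a, b⟩ h <;> simp only [mem_sigma, mem_Ico] at h ⊢
  · omega
  · omega
  · rw [Sigma.mk.injEq]; exact ⟨by omega, heq_of_eq (by omega)⟩
  · rw [Sigma.mk.injEq]; exact ⟨by omega, heq_of_eq (by omega)⟩
  · rw [show n - b - (a - b) = n - a by omega]

section

variable {K : Type*} [Field K]

theorem Bform_single (n : ℕ) (t : ℕ → K) {i j : ℕ} (hi : i ∈ Ico 1 n) (hij : n - i = j)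
    (a b : K) : Bform n t (Pi.single i a) (Pi.single j b) = t i * a * b := by
  rw [Bform, sum_eq_single_of_mem i hi fun m _ hm => by rw [Pi.single_eq_of_ne hm]; ring,
    Pi.single_eq_same, hij, Pi.single_eq_same]

theorem dmul_single (c : ℕ → ℕ → K) (i j : ℕ) :
    dmul c (Pi.single i 1) (Pi.single j 1) = Pi.single (i + j) (c i j) := by
  funext m
  by_cases hm : m = i + j
  · subst hm
    rw [dmul, sum_eq_single_of_mem i (by simp) fun a _ ha => by
      rw [Pi.single_eq_of_ne ha]; ring]
    simp
  · rw [Pi.single_eq_of_ne hm]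
    refine sum_eq_zero fun a ha => ?_
    obtain rfl | hai := eq_or_ne a i
    · rw [Pi.single_eq_of_ne (show m - a ≠ j by rw [mem_range] at ha; omega), mul_zero]
    · rw [Pi.single_eq_of_ne hai]; ring

theorem dmul_eq_sum_Ico {c : ℕ → ℕ → K} (h0l : ∀ j, c 0 j = 0) (h0r : ∀ i, c i 0 = 0)
    (x y : ℕ → K) (m : ℕ) :
    dmul c x y m = ∑ i ∈ Ico 1 m, c i (m - i) * x i * y (m - i) := by
  refine (sum_subset (fun a ha => ?_) fun a ha hna => ?_).symm
  · simp only [mem_Ico, mem_range] at ha ⊢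
    omega
  · obtain rfl | rfl : a = 0 ∨ a = m := by simp only [mem_Ico, mem_range] at ha hna; omega
    · rw [h0l, zero_mul, zero_mul]
    · rw [Nat.sub_self, h0r, zero_mul, zero_mul]

theorem Bform_dmul_left {c : ℕ → ℕ → K} (h0l : ∀ j, c 0 j = 0) (h0r : ∀ i, c i 0 = 0)
    (n : ℕ) (t x y z : ℕ → K) :
    Bform n t (dmul c x y) z =
      ∑ i ∈ Ico 1 n, ∑ j ∈ Ico 1 (n - i), t (i + j) * c i j * x i * y j * z (n - i - j) := by
  rw [← sum_Ico_sum_Ico_sub_comm n fun i j l => t (i + j) * c i j * x i * y j * z l, Bform]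
  refine sum_congr rfl fun m _ => ?_
  rw [dmul_eq_sum_Ico h0l h0r, mul_sum, sum_mul]
  refine sum_congr rfl fun i hi => ?_
  rw [Nat.add_sub_cancel' (by rw [mem_Ico] at hi; omega)]
  ring

theorem Bform_dmul_right {c : ℕ → ℕ → K} (h0l : ∀ j, c 0 j = 0) (h0r : ∀ i, c i 0 = 0)
    (n : ℕ) (t x y z : ℕ → K) :
    Bform n t x (dmul c y z) =
      ∑ i ∈ Ico 1 n, ∑ j ∈ Ico 1 (n - i), t i * c j (n - i - j) * x i * y j * z (n - i - j) := by
  refine sum_congr rfl fun i _ => ?_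
  rw [dmul_eq_sum_Ico h0l h0r, mul_sum]
  refine sum_congr rfl fun j _ => ?_
  ring

theorem Bform_comm_iff (n : ℕ) (t : ℕ → K) :
    (∀ x y, Bform n t x y = Bform n t y x) ↔ ∀ i, 1 ≤ i → i ≤ n - 1 → t i = t (n - i) := by
  refine ⟨fun h i hi1 hin => ?_, fun h x y => ?_⟩
  · have := h (Pi.single i 1) (Pi.single (n - i) 1)
    rwa [Bform_single n t (by rw [mem_Ico]; omega) rfl,
      Bform_single n t (by rw [mem_Ico]; omega) (by omega), mul_one, mul_one, mul_one,
      mul_one] at this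
  · have hreflect := sum_Ico_reflect (fun i => t i * y i * x (n - i)) 1 (Nat.le_succ n)
    rw [Nat.add_sub_cancel_left, Nat.add_sub_cancel] at hreflect
    rw [Bform, Bform, ← hreflect]
    refine sum_congr rfl fun i hi => ?_
    rw [mem_Ico] at hi
    rw [h i hi.1 (by omega), Nat.sub_sub_self hi.2.le]
    ring

theorem Bform_dmul_assoc_iff {c : ℕ → ℕ → K} (h0l : ∀ j, c 0 j = 0) (h0r : ∀ i, c i 0 = 0)
    {n : ℕ} {t : ℕ → K} (hsymm : ∀ i, 1 ≤ i → i ≤ n - 1 → t i = t (n - i)) :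
    (∀ x y z, Bform n t (dmul c x y) z = Bform n t x (dmul c y z)) ↔
      ∀ i j l, 1 ≤ i → 1 ≤ j → 1 ≤ l → i + j + l = n →
        t (i + j) * c i j = t (j + l) * c j l := by
  refine ⟨fun h i j l hi hj hl hsum => ?_, fun h x y z => ?_⟩
  · have := h (Pi.single i 1) (Pi.single j 1) (Pi.single l 1)
    rwa [dmul_single, dmul_single, Bform_single n t (by rw [mem_Ico]; omega) (by omega),
      Bform_single n t (by rw [mem_Ico]; omega) (by omega), mul_one, mul_one,
      hsymm i hi (by omega), show n - i = j + l by omega] at this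
  · rw [Bform_dmul_left h0l h0r, Bform_dmul_right h0l h0r]
    refine sum_congr rfl fun i hi => sum_congr rfl fun j hj => ?_
    rw [mem_Ico] at hi hj
    rw [h i j (n - i - j) hi.1 hj.1 (by omega) (by omega), show j + (n - i - j) = n - i by omega,
      ← hsymm i hi.1 (by omega)]

end

theorem stmt_6_general {K : Type*} [Field K] (n : ℕ) (c : ℕ → ℕ → K)
    (hzero : ∀ i j, i = 0 ∨ j = 0 ∨ n - 1 < i + j → c i j = 0)
    (t : ℕ → K) :
    -- `Bform n t` is a graded 2-cocycle of `p(C)` with values in `V = k·p_n`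
    -- (symmetric and invariant) iff the tuple `t` satisfies the stated relations
    ((∀ x y : ℕ → K, Bform n t x y = Bform n t y x) ∧
      (∀ x y z : ℕ → K, Bform n t (dmul c x y) z = Bform n t x (dmul c y z))) ↔
    ((∀ i, 1 ≤ i → i ≤ n - 1 → t i = t (n - i)) ∧
      (∀ i j l, 1 ≤ i → 1 ≤ j → 1 ≤ l → i + j + l = n →
        t (i + j) * c i j = t (j + l) * c j l)) := by
  rw [Bform_comm_iff]
  exact and_congr_right fun hsymm =>
    Bform_dmul_assoc_iff (fun j => hzero 0 j (Or.inl rfl))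
      (fun i => hzero i 0 (Or.inr (Or.inl rfl))) hsymm

theorem stmt_6 {K : Type*} [Field K] (n : ℕ) (hn : 2 ≤ n) (c : ℕ → ℕ → K)
    (hsym : ∀ i j, c i j = c j i)
    (hassoc : ∀ i j l, 1 ≤ i → 1 ≤ j → 1 ≤ l →
      c j l * c i (j + l) = c i j * c (i + j) l)
    (hzero : ∀ i j, i = 0 ∨ j = 0 ∨ n - 1 < i + j → c i j = 0)
    (t : ℕ → K) :
    -- `Bform n t` is a graded 2-cocycle of `p(C)` with values in `V = k·p_n`
    -- (symmetric and invariant) iff the tuple `t` satisfies the stated relations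
    ((∀ x y : ℕ → K, Bform n t x y = Bform n t y x) ∧
      (∀ x y z : ℕ → K, Bform n t (dmul c x y) z = Bform n t x (dmul c y z))) ↔
    ((∀ i, 1 ≤ i → i ≤ n - 1 → t i = t (n - i)) ∧
      (∀ i j l, 1 ≤ i → 1 ≤ j → 1 ≤ l → i + j + l = n →
        t (i + j) * c i j = t (j + l) * c j l)) :=
  stmt_6_general n c hzero t
end

section
/- Let k be an algebraically closed field and C ∈ M_{n-1}. If the graph Gr(C) has exactly one nonvanishing connected component (a generic component on which some 2-cocycle is nonzero, and every nonzero 2-cocycle is supported only there), then any two nonzero graded 2-cocycles θ, γ of p(C) are proportional, and hence all nontrivial central extensions p(C)_θ with θ ≠ 0 are pairwise isomorphic as graded algebras. -/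
/-- Coefficient matrix of the central extension `p(C)_θ`. -/
def Dmat {K : Type*} [Field K] (n : ℕ) (c : ℕ → ℕ → K) (t : ℕ → K) : ℕ → ℕ → K :=
  fun i j => if i + j = n ∧ 1 ≤ i ∧ 1 ≤ j then t i else c i j

/-- A graded 2-cocycle of `p(C)` with values in `k·p_n`, as a tuple in `k^{n-1}`. -/
def Cocy {K : Type*} [Field K] (n : ℕ) (c : ℕ → ℕ → K) (t : ℕ → K) : Prop :=
  (∀ i, i = 0 ∨ n ≤ i → t i = 0) ∧
  (∀ i, 1 ≤ i → i ≤ n - 1 → t i = t (n - i)) ∧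
  (∀ i j l, 1 ≤ i → 1 ≤ j → 1 ≤ l → i + j + l = n →
    t (i + j) * c i j = t (j + l) * c j l)

/-- Adjacency condition of the graph `Gr(C)`. -/
def adjRel {K : Type*} [Field K] (n : ℕ) (c : ℕ → ℕ → K) (p q : ℕ) : Prop :=
  p + q = n ∨ ∃ i j l, 1 ≤ i ∧ 1 ≤ j ∧ 1 ≤ l ∧ i + j + l = n ∧
    p = i + j ∧ q = j + l ∧ c i j * c j l ≠ 0

/-- The undirected simple graph `Gr(C)` on the vertices `1,...,n-1`. -/
def grC {K : Type*} [Field K] (n : ℕ) (c : ℕ → ℕ → K) : SimpleGraph ℕ where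
  Adj p q := p ≠ q ∧ (adjRel n c p q ∨ adjRel n c q p)
  symm := ⟨by intro p q h; exact ⟨h.1.symm, h.2.symm⟩⟩
  loopless := ⟨by intro p h; exact h.1 rfl⟩

/-- A connected component is nonvanishing if some 2-cocycle takes a nonzero value
on it. -/
def Nonvanishing {K : Type*} [Field K] (n : ℕ) (c : ℕ → ℕ → K)
    (Kc : (grC n c).ConnectedComponent) : Prop :=
  ∃ t : ℕ → K, Cocy n c t ∧
    ∃ p, 1 ≤ p ∧ p ≤ n - 1 ∧ (grC n c).connectedComponentMk p = Kc ∧ t p ≠ 0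

section Cocycle

variable {K : Type*} [Field K] {n : ℕ} {c : ℕ → ℕ → K} {t s : ℕ → K}

theorem Cocy.apply_eq_of_add_eq (ht : Cocy n c t) {a b : ℕ} (h : a + b = n) : t a = t b := by
  by_cases ha : 1 ≤ a ∧ a ≤ n - 1
  · rw [ht.2.1 a ha.1 ha.2]
    congr 1
    omega
  · rw [ht.1 a (by omega), ht.1 b (by omega)]

theorem Cocy.eq_mul_iff_of_adjRel (ht : Cocy n c t) (hs : Cocy n c s) (lam : K) {a b : ℕ}
    (h : adjRel n c a b) : s a = lam * t a ↔ s b = lam * t b := by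
  rcases h with hab | ⟨i, j, l, hi, hj, hl, hijl, rfl, rfl, hc⟩
  · rw [ht.apply_eq_of_add_eq hab, hs.apply_eq_of_add_eq hab]
  · obtain ⟨hcij, hcjl⟩ := mul_ne_zero_iff.mp hc
    rw [← mul_left_inj' hcij, mul_assoc lam, hs.2.2 i j l hi hj hl hijl,
      ht.2.2 i j l hi hj hl hijl, ← mul_assoc, mul_left_inj' hcjl]

theorem Cocy.eq_mul_of_reachable (ht : Cocy n c t) (hs : Cocy n c s) {lam : K} {a b : ℕ}
    (h : (grC n c).Reachable a b) (ha : s a = lam * t a) : s b = lam * t b := by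
  obtain ⟨w⟩ := h
  induction w with
  | nil => exact ha
  | cons hadj _ ih =>
    exact ih (hadj.2.elim (fun h => (ht.eq_mul_iff_of_adjRel hs lam h).mp ha)
      (fun h => (ht.eq_mul_iff_of_adjRel hs lam h).mpr ha))

theorem Cocy.nonvanishing_of_ne_zero (ht : Cocy n c t) {a : ℕ} (ha : t a ≠ 0) :
    Nonvanishing n c ((grC n c).connectedComponentMk a) := by
  have hrange := mt (ht.1 a) ha
  exact ⟨t, ht, a, by omega, by omega, rfl, ha⟩

theorem Cocy.exists_eq_mul_of_existsUnique_nonvanishing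
    (huniq : ∃! Kc : (grC n c).ConnectedComponent, Nonvanishing n c Kc)
    (ht : Cocy n c t) (hs : Cocy n c s) (ht0 : ∃ i, t i ≠ 0) (hs0 : ∃ i, s i ≠ 0) :
    ∃ lam : K, lam ≠ 0 ∧ s = fun i => lam * t i := by
  obtain ⟨Kc, -, hKc⟩ := huniq
  have mem_Kc : ∀ i, t i ≠ 0 ∨ s i ≠ 0 → (grC n c).connectedComponentMk i = Kc := fun i hi =>
    hKc _ (hi.elim ht.nonvanishing_of_ne_zero hs.nonvanishing_of_ne_zero)
  obtain ⟨a, hta⟩ := ht0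
  obtain ⟨b, hsb⟩ := hs0
  have ha : s a = s a / t a * t a := (div_mul_cancel₀ _ hta).symm
  have hprop : ∀ i, s i = s a / t a * t i := by
    intro i
    by_cases hi : t i = 0 ∧ s i = 0
    · rw [hi.1, hi.2, mul_zero]
    · refine ht.eq_mul_of_reachable hs (SimpleGraph.ConnectedComponent.exact ?_) ha
      rw [mem_Kc a (.inl hta), mem_Kc i (not_and_or.mp hi)]
  refine ⟨s a / t a, fun h0 => hsb ?_, funext hprop⟩
  rw [hprop b, h0, zero_mul]

end Cocycle

section Rescaling

variable {K : Type*} [Field K]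

noncomputable def diagEquiv (d : ℕ → K) (hd : ∀ i, d i ≠ 0) : (ℕ → K) ≃ₗ[K] (ℕ → K) :=
  LinearEquiv.piCongrRight fun i => LinearEquiv.smulOfNeZero K K (d i) (hd i)

@[simp]
theorem diagEquiv_apply (d : ℕ → K) (hd : ∀ i, d i ≠ 0) (x : ℕ → K) (i : ℕ) :
    diagEquiv d hd x i = d i * x i :=
  rfl

theorem diagEquiv_single (d : ℕ → K) (hd : ∀ i, d i ≠ 0) (i : ℕ) :
    diagEquiv d hd (Pi.single i 1) = Pi.single i (d i) := by
  ext j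
  rcases eq_or_ne j i with rfl | hji <;> simp [*]

theorem diagEquiv_dmul {c c' : ℕ → ℕ → K} (d : ℕ → K) (hd : ∀ i, d i ≠ 0)
    (h : ∀ i j, d (i + j) * c i j = c' i j * d i * d j) (x y : ℕ → K) :
    diagEquiv d hd (dmul c x y) = dmul c' (diagEquiv d hd x) (diagEquiv d hd y) := by
  ext m
  simp only [diagEquiv_apply, dmul, Finset.mul_sum]
  refine Finset.sum_congr rfl fun i hi => ?_
  have hcoef := h i (m - i)
  rw [Nat.add_sub_cancel' (Nat.lt_succ_iff.mp (Finset.mem_range.mp hi))] at hcoef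
  linear_combination x i * y (m - i) * hcoef

variable {n : ℕ} {c : ℕ → ℕ → K}

theorem update_mul_Dmat (hc : ∀ i j, n ≤ i + j → c i j = 0) (t : ℕ → K) (lam : K) (i j : ℕ) :
    Function.update (1 : ℕ → K) n lam (i + j) * Dmat n c t i j =
      Dmat n c (fun k => lam * t k) i j * Function.update (1 : ℕ → K) n lam i *
        Function.update (1 : ℕ → K) n lam j := by
  simp only [Dmat, Function.update_apply, Pi.one_apply]
  split_ifs <;> first | ring1 | omega | (rw [hc i j (by omega)]; ring1)

theorem exists_gradedEquiv_Dmat_mul (hc : ∀ i j, n ≤ i + j → c i j = 0) (t : ℕ → K) {lam : K}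
    (hlam : lam ≠ 0) :
    ∃ φ : (ℕ → K) ≃ₗ[K] (ℕ → K), (∀ i : ℕ, ∃ d : K, φ (Pi.single i 1) = Pi.single i d) ∧
      ∀ x y, φ (dmul (Dmat n c t) x y) = dmul (Dmat n c fun k => lam * t k) (φ x) (φ y) := by
  have hd : ∀ i, Function.update (1 : ℕ → K) n lam i ≠ 0 := fun i => by
    rw [Function.update_apply]
    split_ifs
    exacts [hlam, one_ne_zero]
  exact ⟨diagEquiv _ hd, fun i => ⟨_, diagEquiv_single _ hd i⟩,
    diagEquiv_dmul _ hd (update_mul_Dmat hc t lam)⟩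

end Rescaling

theorem stmt_16_general {K : Type*} [Field K] (n : ℕ)
    (c : ℕ → ℕ → K)
    (hzero : ∀ i j, i = 0 ∨ j = 0 ∨ n - 1 < i + j → c i j = 0)
    -- Gr(C) has exactly one nonvanishing connected component
    (huniq : ∃! Kc : (grC n c).ConnectedComponent, Nonvanishing n c Kc) :
    ∀ t s : ℕ → K, Cocy n c t → Cocy n c s →
      (∃ i, t i ≠ 0) → (∃ i, s i ≠ 0) →
      -- any two nonzero 2-cocycles are proportional
      (∃ lam : K, lam ≠ 0 ∧ s = fun i => lam * t i) ∧
      -- and the corresponding central extensions are isomorphic as graded algebras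
      (∃ φ : (ℕ → K) ≃ₗ[K] (ℕ → K),
        (∀ i : ℕ, ∃ d : K, φ (Pi.single i 1) = Pi.single i d) ∧
        ∀ x y, φ (dmul (Dmat n c t) x y) = dmul (Dmat n c s) (φ x) (φ y)) := by
  intro t s ht hs ht0 hs0
  obtain ⟨lam, hlam, rfl⟩ := ht.exists_eq_mul_of_existsUnique_nonvanishing huniq hs ht0 hs0
  exact ⟨⟨lam, hlam, rfl⟩,
    exists_gradedEquiv_Dmat_mul (fun i j h => hzero i j (by omega)) t hlam⟩

theorem stmt_16 {K : Type*} [Field K] [IsAlgClosed K] (n : ℕ) (hn : 2 ≤ n)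
    (c : ℕ → ℕ → K)
    (hsym : ∀ i j, c i j = c j i)
    (hassoc : ∀ i j l, 1 ≤ i → 1 ≤ j → 1 ≤ l →
      c j l * c i (j + l) = c i j * c (i + j) l)
    (hzero : ∀ i j, i = 0 ∨ j = 0 ∨ n - 1 < i + j → c i j = 0)
    -- Gr(C) has exactly one nonvanishing connected component
    (huniq : ∃! Kc : (grC n c).ConnectedComponent, Nonvanishing n c Kc) :
    ∀ t s : ℕ → K, Cocy n c t → Cocy n c s →
      (∃ i, t i ≠ 0) → (∃ i, s i ≠ 0) →
      -- any two nonzero 2-cocycles are proportional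
      (∃ lam : K, lam ≠ 0 ∧ s = fun i => lam * t i) ∧
      -- and the corresponding central extensions are isomorphic as graded algebras
      (∃ φ : (ℕ → K) ≃ₗ[K] (ℕ → K),
        (∀ i : ℕ, ∃ d : K, φ (Pi.single i 1) = Pi.single i d) ∧
        ∀ x y, φ (dmul (Dmat n c t) x y) = dmul (Dmat n c s) (φ x) (φ y)) :=
  stmt_16_general n c hzero huniq
end
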